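/- arXiv:1704.06015 — 2 statements merged into one kernel-verified Lean document; each statement's English description precedes it below -/
import Mathlib

section
/- Let C > 1 be a real constant and define B(θ) = (1/2)·ln(C + cos θ) for θ ∈ (0, π). Then B satisfies the fourth-order nonlinear ODE: 16·cot θ·(B')³ + 4·(B'')² − 4·(B')²·(cot²θ − 4·B'') − B''·cot²θ + 2·cot θ·B''' + B'·(cot θ·(csc²θ + 16·B'' + 2) + 8·B''') + B'''' = 0 at every θ ∈ (0, π), where B', B'', B''', B'''' denote the first through fourth derivatives of B with respect to θ. -/
/-!
Writing `u = C + cos θ`, each derivative of `B = (log u) / 2` is a rational function of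
`sin θ`, `cos θ` and `u`, because `u' = -sin θ` and `u'' = -cos θ`. Substituting these four
rational functions into the ODE and clearing denominators leaves
`4 cos θ · u³ · (sin² θ + cos² θ - 1)`, which vanishes.
-/

open Real

noncomputable section

def halfLogDeriv₁ (C θ : ℝ) : ℝ := -sin θ / (2 * (C + cos θ))

def halfLogDeriv₂ (C θ : ℝ) : ℝ :=
  -((C + cos θ) * cos θ + sin θ ^ 2) / (2 * (C + cos θ) ^ 2)

def halfLogDeriv₃ (C θ : ℝ) : ℝ :=
  sin θ * ((C + cos θ) ^ 2 - 3 * cos θ * (C + cos θ) - 2 * sin θ ^ 2) / (2 * (C + cos θ) ^ 3)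

def halfLogDeriv₄ (C θ : ℝ) : ℝ :=
  (cos θ * (C + cos θ) ^ 3 - 3 * cos θ ^ 2 * (C + cos θ) ^ 2
    + 4 * sin θ ^ 2 * (C + cos θ) ^ 2 - 12 * cos θ * sin θ ^ 2 * (C + cos θ)
    - 6 * sin θ ^ 4) / (2 * (C + cos θ) ^ 4)

end

section

variable {C x : ℝ}

theorem hasDerivAt_halfLog (hu : C + cos x ≠ 0) :
    HasDerivAt (fun θ => log (C + cos θ) / 2) (halfLogDeriv₁ C x) x := by
  refine ((((hasDerivAt_cos x).const_add C).log hu).div_const 2).congr_deriv ?_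
  rw [halfLogDeriv₁]
  field_simp

theorem hasDerivAt_halfLogDeriv₁ (hu : C + cos x ≠ 0) :
    HasDerivAt (halfLogDeriv₁ C) (halfLogDeriv₂ C x) x := by
  have hden := ((hasDerivAt_cos x).const_add C).const_mul 2
  refine ((hasDerivAt_sin x).neg.div hden (mul_ne_zero two_ne_zero hu)).congr_deriv ?_
  rw [halfLogDeriv₂]
  simp only [Pi.neg_apply]
  field_simp
  ring

theorem hasDerivAt_halfLogDeriv₂ (hu : C + cos x ≠ 0) :
    HasDerivAt (halfLogDeriv₂ C) (halfLogDeriv₃ C x) x := by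
  have hu' := (hasDerivAt_cos x).const_add C
  have hnum := ((hu'.mul (hasDerivAt_cos x)).add ((hasDerivAt_sin x).pow 2)).neg
  have hden := (hu'.pow 2).const_mul 2
  refine (hnum.div hden (mul_ne_zero two_ne_zero (pow_ne_zero 2 hu))).congr_deriv ?_
  rw [halfLogDeriv₃]
  simp only [Pi.neg_apply, Pi.add_apply, Pi.mul_apply, Pi.pow_apply]
  field_simp
  ring

theorem hasDerivAt_halfLogDeriv₃ (hu : C + cos x ≠ 0) :
    HasDerivAt (halfLogDeriv₃ C) (halfLogDeriv₄ C x) x := by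
  have hu' := (hasDerivAt_cos x).const_add C
  have hnum := (hasDerivAt_sin x).mul
    (((hu'.pow 2).sub (((hasDerivAt_cos x).const_mul 3).mul hu')).sub
      (((hasDerivAt_sin x).pow 2).const_mul 2))
  have hden := (hu'.pow 3).const_mul 2
  refine (hnum.div hden (mul_ne_zero two_ne_zero (pow_ne_zero 3 hu))).congr_deriv ?_
  rw [halfLogDeriv₄]
  simp only [Pi.sub_apply, Pi.mul_apply, Pi.pow_apply]
  field_simp
  ring

theorem fourth_order_ODE_halfLogDeriv (hs : sin x ≠ 0) (hu : C + cos x ≠ 0) :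
    16 * (cos x / sin x) * halfLogDeriv₁ C x ^ 3 + 4 * halfLogDeriv₂ C x ^ 2
      - 4 * halfLogDeriv₁ C x ^ 2 * ((cos x / sin x) ^ 2 - 4 * halfLogDeriv₂ C x)
      - halfLogDeriv₂ C x * (cos x / sin x) ^ 2 + 2 * (cos x / sin x) * halfLogDeriv₃ C x
      + halfLogDeriv₁ C x * ((cos x / sin x) * ((1 / sin x) ^ 2 + 16 * halfLogDeriv₂ C x + 2)
        + 8 * halfLogDeriv₃ C x)
      + halfLogDeriv₄ C x = 0 := by
  rw [halfLogDeriv₁, halfLogDeriv₂, halfLogDeriv₃, halfLogDeriv₄]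
  field_simp
  linear_combination 4 * cos x * (C + cos x) ^ 3 * sin_sq_add_cos_sq x

end

/-- For `C > 1`, the function `B θ = (1/2)·ln(C + cos θ)` satisfies the fourth-order
nonlinear ODE (the angular part of the vacuum condition for the axi-symmetric
Bondi-Sachs metrics with nonzero cosmological constant) on `(0, π)`. -/
theorem B_satisfies_fourth_order_ODE (C : ℝ) (hC : 1 < C)
    (B : ℝ → ℝ) (hB : ∀ θ, B θ = Real.log (C + Real.cos θ) / 2) :
    ∀ θ ∈ Set.Ioo (0 : ℝ) π,
      let B' := deriv B
      let B'' := deriv (deriv B)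
      let B''' := deriv (deriv (deriv B))
      let B'''' := deriv (deriv (deriv (deriv B)))
      let cot := Real.cos θ / Real.sin θ
      let csc := 1 / Real.sin θ
      16 * cot * (B' θ) ^ 3 + 4 * (B'' θ) ^ 2
        - 4 * (B' θ) ^ 2 * (cot ^ 2 - 4 * B'' θ)
        - B'' θ * cot ^ 2 + 2 * cot * B''' θ
        + B' θ * (cot * (csc ^ 2 + 16 * B'' θ + 2) + 8 * B''' θ)
        + B'''' θ = 0 := by
  have hu (x : ℝ) : C + cos x ≠ 0 := by linarith [neg_one_le_cos x]
  have d₁ : deriv B = halfLogDeriv₁ C :=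
    funext hB ▸ funext fun x => (hasDerivAt_halfLog (hu x)).deriv
  have d₂ : deriv (halfLogDeriv₁ C) = halfLogDeriv₂ C :=
    funext fun x => (hasDerivAt_halfLogDeriv₁ (hu x)).deriv
  have d₃ : deriv (halfLogDeriv₂ C) = halfLogDeriv₃ C :=
    funext fun x => (hasDerivAt_halfLogDeriv₂ (hu x)).deriv
  have d₄ : deriv (halfLogDeriv₃ C) = halfLogDeriv₄ C :=
    funext fun x => (hasDerivAt_halfLogDeriv₃ (hu x)).deriv
  intro θ hθ
  simp only [d₁, d₂, d₃, d₄]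
  exact fourth_order_ODE_halfLogDeriv (sin_pos_of_pos_of_lt_pi hθ.1 hθ.2).ne' (hu θ)
end

section
/- Let C : ℝ → ℝ be differentiable with C(u) > 1 for all u, let m ∈ ℝ, and define σ(u) = −C'(u)/(C(u)² − 1), τ(u) = m·(C(u)² − 1)^{3/2}, and for (u, θ) ∈ ℝ × (0, π) define B(u, θ) = (1/2)·ln(C(u) + cos θ) and M(u, θ) = τ(u)/(C(u) + cos θ)². Then for all u ∈ ℝ and θ ∈ (0, π): 4·M·∂B/∂u − 2·∂M/∂u − 6·cos θ·M·σ − 3·sin θ·(∂M/∂θ)·σ = 0, where ∂/∂u and ∂/∂θ denote partial derivatives in the first and second variable respectively. -/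
/-!
Since `τ' = 3 C C' τ / (C² - 1)`, every term of the equation is `τ C' / (C + cos θ)³` times a
polynomial in `C`, `cos θ`, `sin θ`; the sum of these polynomials vanishes once
`sin² θ = 1 - cos² θ`.
-/

open Real

theorem HasDerivAt.div_sq {f g : ℝ → ℝ} {f' g' x : ℝ} (hf : HasDerivAt f f' x)
    (hg : HasDerivAt g g' x) (hx : g x ≠ 0) :
    HasDerivAt (fun y => f y / g y ^ 2) ((f' * g x - 2 * f x * g') / g x ^ 3) x := by
  refine (hf.fun_div (hg.fun_pow 2) (pow_ne_zero 2 hx)).congr_deriv ?_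
  field_simp
  push_cast
  ring

theorem HasDerivAt.rpow_const_of_ne_zero {f : ℝ → ℝ} {f' x : ℝ} (p : ℝ) (hf : HasDerivAt f f' x)
    (hx : f x ≠ 0) :
    HasDerivAt (fun y => f y ^ p) (p * f' / f x * f x ^ p) x := by
  refine (hf.rpow_const (p := p) (Or.inl hx)).congr_deriv ?_
  rw [Real.rpow_sub_one hx]
  ring

theorem vacuum_equation_identity {c c' τ a s : ℝ} (hD : c + a ≠ 0) (hs : c ^ 2 - 1 ≠ 0)
    (hsin : s ^ 2 + a ^ 2 = 1) :
    4 * (τ / (c + a) ^ 2) * (c' / (c + a) / 2)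
      - 2 * ((3 * c * c' / (c ^ 2 - 1) * τ * (c + a) - 2 * τ * c') / (c + a) ^ 3)
      - 6 * a * (τ / (c + a) ^ 2) * (-c' / (c ^ 2 - 1))
      - 3 * s * ((0 * (c + a) - 2 * τ * -s) / (c + a) ^ 3) * (-c' / (c ^ 2 - 1)) = 0 := by
  field_simp
  linear_combination (12 * τ * c') * hsin

/-- The u-dependent part of the vacuum field equation holds for the explicit data
`B(u,θ) = (1/2)·ln(C(u) + cos θ)`, `M(u,θ) = τ(u)/(C(u) + cos θ)²`,
`σ = −C'/(C² − 1)`, `τ = m·(C² − 1)^{3/2}`. -/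
theorem u_dependent_vacuum_equation (C : ℝ → ℝ) (hCdiff : Differentiable ℝ C)
    (hC : ∀ u, 1 < C u) (m : ℝ)
    (σ τ : ℝ → ℝ) (B M : ℝ → ℝ → ℝ)
    (hσ : ∀ u, σ u = -(deriv C u) / ((C u) ^ 2 - 1))
    (hτ : ∀ u, τ u = m * ((C u) ^ 2 - 1) ^ ((3 : ℝ) / 2))
    (hB : ∀ u θ, B u θ = Real.log (C u + Real.cos θ) / 2)
    (hM : ∀ u θ, M u θ = τ u / (C u + Real.cos θ) ^ 2) :
    ∀ u : ℝ, ∀ θ ∈ Set.Ioo (0 : ℝ) π,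
      4 * M u θ * deriv (fun v => B v θ) u
        - 2 * deriv (fun v => M v θ) u
        - 6 * Real.cos θ * M u θ * σ u
        - 3 * Real.sin θ * deriv (fun t => M u t) θ * σ u = 0 := by
  intro u θ _
  have hD : C u + cos θ ≠ 0 := by linarith [hC u, neg_one_le_cos θ]
  have hs : C u ^ 2 - 1 ≠ 0 := by nlinarith [hC u]
  have hCu : HasDerivAt C (deriv C u) u := (hCdiff u).hasDerivAt
  have hτu : HasDerivAt τ (3 * C u * deriv C u / (C u ^ 2 - 1) * τ u) u := by
    rw [funext hτ]
    have hsq := (hCu.fun_pow 2).sub_const 1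
    refine ((hsq.rpow_const_of_ne_zero (3 / 2) hs).const_mul m).congr_deriv ?_
    push_cast
    ring
  have hDu : HasDerivAt (fun v => C v + cos θ) (deriv C u) u := hCu.add_const _
  have hDθ : HasDerivAt (fun t => C u + cos t) (-sin θ) θ := (hasDerivAt_cos θ).const_add _
  simp only [hB, hM]
  rw [((hDu.log hD).div_const 2).deriv, (hτu.div_sq hDu hD).deriv,
    ((hasDerivAt_const θ (τ u)).div_sq hDθ hD).deriv, hσ]
  exact vacuum_equation_identity hD hs (sin_sq_add_cos_sq θ)
end
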